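/- Let E be a real vector space, g a positive semidefinite symmetric bilinear form on E, v an element of E, and ω a linear functional on E with ω(v) ≠ 0. Assume that every x ∈ E with g(x,x) = 0 is a scalar multiple of v. Then the symmetric bilinear form σ defined by σ(x,y) := g(x,y) + ω(x)ω(y) is positive definite, i.e. σ(x,x) > 0 for every x ≠ 0. -/
import Mathlib


/-- If `g` is a positive semidefinite symmetric bilinear form on a real
vector space `E`, `ω` is a linear functional with `ω v ≠ 0`, and every null vector of
`g` is a multiple of `v`, then `σ(x,y) := g(x,y) + ω(x)·ω(y)` is positive definite. -/
theorem sigma_positive_definite {E : Type*} [AddCommGroup E] [Module ℝ E]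
    (g : E →ₗ[ℝ] E →ₗ[ℝ] ℝ) (v : E) (ω : E →ₗ[ℝ] ℝ)
    (hsymm : ∀ x y : E, g x y = g y x)
    (hpsd : ∀ x : E, 0 ≤ g x x)
    (hω : ω v ≠ 0)
    (hnull : ∀ x : E, g x x = 0 → ∃ c : ℝ, x = c • v) :
    ∀ x : E, x ≠ 0 → 0 < g x x + ω x * ω x := by
  intro x hx
  rcases lt_or_eq_of_le (hpsd x) with h | h
  · have := mul_self_nonneg (ω x); linarith
  · obtain ⟨c, rfl⟩ := hnull x h.symm
    have hc : c ≠ 0 := by rintro rfl; simp at hx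
    have : ω (c • v) = c * ω v := by simp [mul_comm]
    rw [this, ← h.symm]
    have : 0 < (c * ω v) * (c * ω v) := mul_pos_iff.mpr (by
      rcases (mul_ne_zero hc hω).lt_or_gt with h' | h'
      · right; exact ⟨h', h'⟩
      · left; exact ⟨h', h'⟩)
    linarith
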